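/- Let M > 0, m_e ≥ 0, κ = k + 1/2 with k ∈ ℤ, λ ∈ ℝ. Let r : ℝ → (M, ∞) be the inverse of the tortoise map u(r) = r + 2M log(r − M) − 2M²/(r − M), and let P(r) = [[−κΩ(r) − m_e r γ(r), −λγ(r)],[−λγ(r), −κΩ(r) + m_e r γ(r)]] with Ω(r) = M/(r² + M²), γ(r) = (r − M)/(r² + M²), and P₀ = [[−m_e, 0],[0, m_e]]. Then for every d > 0, lim_{x → +∞} (1/x) ∫_d^x ‖P(r(u)) − P₀‖ du = 0, where ‖·‖ denotes the operator norm on 2×2 complex matrices. -/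

import Mathlib

/-! The tortoise map is a strictly increasing bijection of `(M, ∞)` onto `ℝ`, so its inverse
`r(u)` is continuous, increasing and tends to `∞`. Since `Ω(r) → 0`, `γ(r) → 0` and `r γ(r) → 1`
as `r → ∞`, `P(r) → P₀` entrywise; thus `‖P(r(u)) − P₀‖` is continuous and tends to `0`, and the
Cesàro mean of such a function tends to `0` (split `∫_d^x` where the integrand drops below `ε/2`). -/

open Set Filter Topology MeasureTheory
open scoped Matrix.Norms.L2Operator

/-- The tortoise coordinate `u(r) = r + 2M log(r − M) − 2M²/(r − M)`. -/
noncomputable def tortoise (M r : ℝ) : ℝ :=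
  r + 2 * M * Real.log (r - M) - 2 * M ^ 2 / (r - M)

/-- `Ω(r) = M/(r² + M²)`. -/
noncomputable def OmegaF (M r : ℝ) : ℝ := M / (r ^ 2 + M ^ 2)

/-- `γ(r) = (r − M)/(r² + M²)`. -/
noncomputable def gam (M r : ℝ) : ℝ := (r - M) / (r ^ 2 + M ^ 2)

/-- The potential matrix, with complex entries so that the `L²` operator norm
(`open scoped Matrix.L2OpNorm`) is available. -/
noncomputable def Pmat (M me κ lam r : ℝ) : Matrix (Fin 2) (Fin 2) ℂ :=
  !![((-(κ * OmegaF M r) - me * r * gam M r : ℝ) : ℂ), ((-(lam * gam M r) : ℝ) : ℂ);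
     ((-(lam * gam M r) : ℝ) : ℂ), ((-(κ * OmegaF M r) + me * r * gam M r : ℝ) : ℂ)]

theorem tendsto_inv_smul_intervalIntegral_of_tendsto_zero {E : Type*} [NormedAddCommGroup E]
    [NormedSpace ℝ E] {g : ℝ → E} (hg : ∀ a b, IntervalIntegrable g volume a b)
    (hlim : Tendsto g atTop (𝓝 0)) (d : ℝ) :
    Tendsto (fun x : ℝ => x⁻¹ • ∫ u in d..x, g u) atTop (𝓝 0) := by
  rw [NormedAddGroup.tendsto_nhds_zero]
  intro ε hε
  obtain ⟨X, hX⟩ := eventually_atTop.1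
    (NormedAddGroup.tendsto_nhds_zero.1 hlim (ε / 2) (half_pos hε))
  set C := ‖∫ u in d..X, g u‖
  filter_upwards [eventually_ge_atTop X, eventually_gt_atTop 0,
    eventually_gt_atTop (2 * C / ε - X)] with x hXx hx hCx
  have htail : ‖∫ u in X..x, g u‖ ≤ ε / 2 * (x - X) := by
    rw [← abs_of_nonneg (sub_nonneg.2 hXx)]
    exact intervalIntegral.norm_integral_le_of_norm_le_const
      fun u hu => (hX u (uIoc_of_le hXx ▸ hu).1.le).le
  have hsplit := intervalIntegral.integral_add_adjacent_intervals (hg d X) (hg X x)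
  have hC : 2 * C < (x + X) * ε := by
    have := (div_lt_iff₀ hε).1 (sub_lt_iff_lt_add.1 hCx)
    linarith
  calc ‖x⁻¹ • ∫ u in d..x, g u‖ = x⁻¹ * ‖∫ u in d..x, g u‖ := by
        rw [norm_smul, Real.norm_of_nonneg (inv_nonneg.2 hx.le)]
    _ ≤ x⁻¹ * (C + ε / 2 * (x - X)) := by
        rw [← hsplit]
        gcongr
        exact (norm_add_le _ _).trans (add_le_add le_rfl htail)
    _ < ε := by
        rw [inv_mul_lt_iff₀ hx]
        linarith

theorem StrictMonoOn.strictMono_of_rightInverse {α β : Type*} [LinearOrder α] [Preorder β]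
    {f : α → β} {g : β → α} {s : Set α} (hf : StrictMonoOn f s) (hgs : ∀ y, g y ∈ s)
    (hfg : Function.RightInverse g f) : StrictMono g := fun a b hab =>
  (hf.lt_iff_lt (hgs a) (hgs b)).1 (by rwa [hfg a, hfg b])

theorem Monotone.continuous_of_isOpen_range {α β : Type*} [LinearOrder α] [TopologicalSpace α]
    [OrderTopology α] [LinearOrder β] [TopologicalSpace β] [OrderTopology β] [DenselyOrdered β]
    {g : α → β} (hg : Monotone g) (hrange : IsOpen (range g)) : Continuous g :=
  continuous_iff_continuousAt.2 fun a =>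
    continuousAt_of_monotoneOn_of_image_mem_nhds (hg.monotoneOn univ) univ_mem
      (by rw [image_univ]; exact hrange.mem_nhds (mem_range_self a))

theorem tortoise_strictMonoOn {M : ℝ} (hM : 0 ≤ M) : StrictMonoOn (tortoise M) (Ioi M) := by
  intro a ha b _ hab
  have haM : 0 < a - M := sub_pos.2 ha
  have hlog : 2 * M * Real.log (a - M) ≤ 2 * M * Real.log (b - M) := by gcongr
  have hfrac : 2 * M ^ 2 / (b - M) ≤ 2 * M ^ 2 / (a - M) := by gcongr
  unfold tortoise
  linarith

theorem tendsto_mul_gam_atTop (M : ℝ) : Tendsto (fun r => r * gam M r) atTop (𝓝 1) := by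
  have hinv : Tendsto (fun r : ℝ => M / r) atTop (𝓝 0) := tendsto_const_nhds.div_atTop tendsto_id
  -- `r γ(r) = (1 - M/r) / (1 + (M/r)²)` for `r ≠ 0`
  have h := ((tendsto_const_nhds (x := (1 : ℝ))).sub hinv).div
    ((tendsto_const_nhds (x := (1 : ℝ))).add (hinv.pow 2)) (by norm_num)
  norm_num at h
  refine h.congr' ?_
  filter_upwards [eventually_ne_atTop 0] with r hr
  have : r ^ 2 + M ^ 2 ≠ 0 := by positivity
  simp only [gam, Pi.div_apply]
  field_simp

theorem tendsto_gam_atTop (M : ℝ) : Tendsto (gam M) atTop (𝓝 0) := by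
  refine ((tendsto_mul_gam_atTop M).div_atTop tendsto_id).congr' ?_
  filter_upwards [eventually_ne_atTop 0] with r hr
  exact mul_div_cancel_left₀ _ hr

theorem tendsto_OmegaF_atTop (M : ℝ) : Tendsto (OmegaF M) atTop (𝓝 0) :=
  tendsto_const_nhds.div_atTop ((tendsto_pow_atTop two_ne_zero).atTop_add tendsto_const_nhds)

theorem Matrix.tendsto_of_fin_two {α R : Type*} [TopologicalSpace R] {l : Filter α}
    {a b c d : α → R} {a₀ b₀ c₀ d₀ : R} (ha : Tendsto a l (𝓝 a₀)) (hb : Tendsto b l (𝓝 b₀))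
    (hc : Tendsto c l (𝓝 c₀)) (hd : Tendsto d l (𝓝 d₀)) :
    Tendsto (fun x => !![a x, b x; c x, d x]) l (𝓝 !![a₀, b₀; c₀, d₀]) :=
  tendsto_pi_nhds.2 fun i => tendsto_pi_nhds.2 fun j => by
    fin_cases i <;> fin_cases j <;> simpa

theorem tendsto_Pmat_atTop (M me κ lam : ℝ) :
    Tendsto (Pmat M me κ lam) atTop (𝓝 !![((-me : ℝ) : ℂ), 0; 0, ((me : ℝ) : ℂ)]) := by
  have hΩ := (tendsto_OmegaF_atTop M).const_mul κ
  have hrγ := (tendsto_mul_gam_atTop M).const_mul me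
  have hγ := (tendsto_gam_atTop M).const_mul lam
  refine Matrix.tendsto_of_fin_two ?_ ?_ ?_ ?_
  · simpa [mul_assoc] using (hΩ.neg.sub hrγ).ofReal
  · simpa using hγ.neg.ofReal
  · simpa using hγ.neg.ofReal
  · simpa [mul_assoc] using (hΩ.neg.add hrγ).ofReal

theorem continuous_Pmat {M : ℝ} (hM : M ≠ 0) (me κ lam : ℝ) : Continuous (Pmat M me κ lam) := by
  have hden (r : ℝ) : r ^ 2 + M ^ 2 ≠ 0 := by positivity
  have hΩ : Continuous (OmegaF M) := continuous_const.div (by fun_prop) hden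
  have hγ : Continuous (gam M) := (continuous_id.sub continuous_const).div (by fun_prop) hden
  refine continuous_iff_continuousAt.2 fun r => Matrix.tendsto_of_fin_two ?_ ?_ ?_ ?_ <;>
    exact Continuous.tendsto (by fun_prop) r

theorem Pmat_cesaro_mean_infinity_general
    (M me lam : ℝ) (hM : 0 < M)
    (κ : ℝ)
    (rr : ℝ → ℝ) (hrr_mem : ∀ u, rr u ∈ Ioi M)
    (hrr_right : ∀ u, tortoise M (rr u) = u)
    (hrr_left : ∀ r ∈ Ioi M, rr (tortoise M r) = r)
    (d : ℝ) :
    Tendsto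
      (fun x => (1 / x) *
        ∫ u in d..x, ‖Pmat M me κ lam (rr u) - !![((-me : ℝ) : ℂ), 0; 0, ((me : ℝ) : ℂ)]‖)
      atTop (𝓝 0) := by
  have hrange : range rr = Ioi M :=
    (range_subset_iff.2 hrr_mem).antisymm fun r hr => ⟨_, hrr_left r hr⟩
  have hmono : Monotone rr :=
    ((tortoise_strictMonoOn hM.le).strictMono_of_rightInverse hrr_mem hrr_right).monotone
  have hcont : Continuous rr := hmono.continuous_of_isOpen_range (hrange ▸ isOpen_Ioi)
  have htop : Tendsto rr atTop atTop :=
    tendsto_atTop_atTop_of_monotone' hmono (hrange ▸ not_bddAbove_Ioi M)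
  have hnorm_cont : Continuous fun u =>
      ‖Pmat M me κ lam (rr u) - !![((-me : ℝ) : ℂ), 0; 0, ((me : ℝ) : ℂ)]‖ :=
    (((continuous_Pmat hM.ne' me κ lam).comp hcont).sub continuous_const).norm
  have hnorm_lim := (tendsto_iff_norm_sub_tendsto_zero.1 (tendsto_Pmat_atTop M me κ lam)).comp htop
  simpa only [one_div, smul_eq_mul] using tendsto_inv_smul_intervalIntegral_of_tendsto_zero
    (fun a b => hnorm_cont.intervalIntegrable a b) hnorm_lim d

/-- For every `d > 0`,
`(1/x) ∫_d^x ‖P(r(u)) − P₀‖ du → 0` as `x → +∞`, where `r(u)` is the inverse of the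
tortoise map, `P₀ = diag(−m_e, m_e)` and `‖·‖` is the `L²` operator norm on `2×2`
complex matrices. -/
theorem Pmat_cesaro_mean_infinity
    (M me lam : ℝ) (k : ℤ) (hM : 0 < M) (hme : 0 ≤ me)
    (κ : ℝ) (hκ : κ = (k : ℝ) + 1 / 2)
    (rr : ℝ → ℝ) (hrr_mem : ∀ u, rr u ∈ Ioi M)
    (hrr_right : ∀ u, tortoise M (rr u) = u)
    (hrr_left : ∀ r ∈ Ioi M, rr (tortoise M r) = r)
    (d : ℝ) (hd : 0 < d) :
    Tendsto
      (fun x => (1 / x) *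
        ∫ u in d..x, ‖Pmat M me κ lam (rr u) - !![((-me : ℝ) : ℂ), 0; 0, ((me : ℝ) : ℂ)]‖)
      atTop (𝓝 0) :=
  Pmat_cesaro_mean_infinity_general M me lam hM κ rr hrr_mem hrr_right hrr_left d
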